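/- Let K be a field, A = K[a_1,…,a_n] a finitely generated K-algebra with a minimal generating set {a_1,…,a_n}, and π: K⟨X_1,…,X_n⟩ → A the K-algebra epimorphism with π(X_i) = a_i, I = Ker π. Then A is a solvable polynomial algebra if and only if both of the following hold: (a) with respect to some monomial ordering ≺_X on the word basis 𝔹 of K⟨X_1,…,X_n⟩, the ideal I has a finite Gröbner basis, and the reduced Gröbner basis of I has the form 𝒢 = {g_{ji} = X_jX_i − λ_{ji}X_iX_j − F_{ji} | 1 ≤ i < j ≤ n} with LM(g_{ji}) = X_jX_i, λ_{ji} ∈ K∖{0}, and each F_{ji} a K-linear combination of ordered words X_1^{α_1}X_2^{α_2}···X_n^{α_n} — so that the cosets 𝔅̄ = {X̄_1^{α_1}···X̄_n^{α_n} | α ∈ ℕ^n} form a PBW K-basis of A = K⟨X_1,…,X_n⟩/I; and (b) there is a monomial ordering ≺ on the PBW basis 𝔅̄ such that LM(F̄_{ji}) ≺ X̄_iX̄_j whenever F̄_{ji} ≠ 0, where F̄_{ji} is the image of F_{ji} in A. -/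

import Mathlib

noncomputable section

open scoped BigOperators

/-- A monomial ordering on the exponent monoid `ℕ^n`: a well-ordering, total and transitive,
admitting `0` (i.e. the monomial `1`) as least element and compatible with addition of
exponents (i.e. with multiplication of monomials from both sides). -/
structure MonOrder (n : ℕ) where
  lt : (Fin n → ℕ) → (Fin n → ℕ) → Prop
  wf : WellFounded lt
  lt_trans : ∀ {α β γ}, lt α β → lt β γ → lt α γ
  lt_total : ∀ α β, lt α β ∨ α = β ∨ lt β α
  zero_min : ∀ α : Fin n → ℕ, α ≠ 0 → lt 0 α
  add_right : ∀ {α β : Fin n → ℕ} (γ : Fin n → ℕ), lt α β → lt (α + γ) (β + γ)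

/-- The ordered monomial `a₁^{α 1} ⋯ a_n^{α n}` in the generators `a`. -/
def SolvMono {A : Type*} [Ring A] {n : ℕ} (a : Fin n → A) (α : Fin n → ℕ) : A :=
  ((List.finRange n).map fun i => a i ^ α i).prod

/-- A solvable polynomial algebra structure on a `K`-algebra `A` with generators
`gen 1, …, gen n`:  (S1) the ordered monomials in the generators form a PBW `K`-basis;
(S2) there is a monomial ordering `ord` such that
`a^α a^β = λ_{α,β} a^{α+β} + (terms ≺ a^{α+β})` with `λ_{α,β} ≠ 0`. -/
structure SolvAlg (K : Type*) [Field K] (A : Type*) [Ring A] [Algebra K A] (n : ℕ) where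
  gen : Fin n → A
  basis : Module.Basis (Fin n → ℕ) K A
  basis_eq : ∀ α, basis α = SolvMono gen α
  ord : MonOrder n
  s2_lc : ∀ α β, basis.repr (basis α * basis β) (α + β) ≠ 0
  s2_lower : ∀ α β δ, δ ∈ (basis.repr (basis α * basis β)).support → δ ≠ α + β →
    ord.lt δ (α + β)

namespace SolvAlg

variable {K : Type*} [Field K] {A : Type*} [Ring A] [Algebra K A] {n : ℕ}

/-- `α` is the exponent of the leading monomial of `f` (so in particular `f ≠ 0`). -/
def IsLM (S : SolvAlg K A n) (f : A) (α : Fin n → ℕ) : Prop :=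
  α ∈ (S.basis.repr f).support ∧
    ∀ β ∈ (S.basis.repr f).support, β ≠ α → S.ord.lt β α

/-- Left division of monomials: `a^α |_L a^β` iff `a^β = LM(a^γ a^α)` for some monomial `a^γ`. -/
def DvdL (S : SolvAlg K A n) (α β : Fin n → ℕ) : Prop :=
  ∃ γ, S.IsLM (S.basis γ * S.basis α) β

/-- `α ⪯ β` for the monomial ordering. -/
def LEord (S : SolvAlg K A n) (α β : Fin n → ℕ) : Prop :=
  α = β ∨ S.ord.lt α β

/-- `G` is a left Gröbner basis of the left ideal `N`. -/
def IsGBIdeal (S : SolvAlg K A n) (N : Ideal A) (G : Set A) : Prop :=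
  G ⊆ (N : Set A) ∧ (0 : A) ∉ G ∧
    ∀ f ∈ N, f ≠ 0 → ∃ g ∈ G, ∃ α β, S.IsLM g α ∧ S.IsLM f β ∧ S.DvdL α β

/-- The set of (exponents of) normal monomials mod `G`. -/
def NormalSet (S : SolvAlg K A n) (G : Set A) : Set (Fin n → ℕ) :=
  {γ | ∀ g ∈ G, ∀ α, S.IsLM g α → ¬ S.DvdL α γ}

/-- A minimal left Gröbner basis: no proper subset is again a left Gröbner basis. -/
def IsMinimalGBIdeal (S : SolvAlg K A n) (N : Ideal A) (G : Set A) : Prop :=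
  IsGBIdeal S N G ∧ ∀ G' : Set A, G' ⊂ G → ¬ IsGBIdeal S N G'

/-- A reduced left Gröbner basis: minimal, monic, and all tails normal mod `G`. -/
def IsReducedGBIdeal (S : SolvAlg K A n) (N : Ideal A) (G : Set A) : Prop :=
  IsMinimalGBIdeal S N G ∧
  (∀ g ∈ G, ∀ α, S.IsLM g α → S.basis.repr g α = 1) ∧
  (∀ g ∈ G, ∀ α, S.IsLM g α →
    g - S.basis α ∈ Submodule.span K ((fun γ => S.basis γ) '' NormalSet S G))

/-- The set of monomials `a^α e_i` occurring in an element `ξ` of the free module `A^s`. -/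
def MSupp (S : SolvAlg K A n) {s : ℕ} (ξ : Fin s → A) : Set ((Fin n → ℕ) × Fin s) :=
  {p | S.basis.repr (ξ p.2) p.1 ≠ 0}

/-- `p` is the leading monomial of `ξ` with respect to the (left monomial) ordering `r`
on the monomials of the free module `A^s`. -/
def IsLMMr (S : SolvAlg K A n) {s : ℕ}
    (r : ((Fin n → ℕ) × Fin s) → ((Fin n → ℕ) × Fin s) → Prop)
    (ξ : Fin s → A) (p : (Fin n → ℕ) × Fin s) : Prop :=
  p ∈ S.MSupp ξ ∧ ∀ q ∈ S.MSupp ξ, q ≠ p → r q p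

/-- Left division of module monomials:  `a^α e_i |_L a^β e_j` iff `i = j` and
`a^β e_i = LM(a^γ · a^α e_i)` for some `a^γ`. -/
def MDvdL (S : SolvAlg K A n) {s : ℕ} (p q : (Fin n → ℕ) × Fin s) : Prop :=
  p.2 = q.2 ∧ ∃ γ, S.IsLM (S.basis γ * S.basis p.1) q.1

/-- `G` is a left Gröbner basis of the set (submodule) `Nset` of the free module `A^s`,
with respect to the left monomial ordering `r`. -/
def IsGBrel (S : SolvAlg K A n) {s : ℕ}
    (r : ((Fin n → ℕ) × Fin s) → ((Fin n → ℕ) × Fin s) → Prop)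
    (Nset : Set (Fin s → A)) (G : Set (Fin s → A)) : Prop :=
  G ⊆ Nset ∧ (0 : Fin s → A) ∉ G ∧
    ∀ ξ ∈ Nset, ξ ≠ 0 → ∃ γ ∈ G, ∃ p q, S.IsLMMr r γ p ∧ S.IsLMMr r ξ q ∧ S.MDvdL p q

/-- The left S-polynomial `S_ℓ(ξ, ζ)` of `ξ, ζ` whose leading monomials are
`a^α e_i` and `a^β e_j` respectively. -/
def spolyData (S : SolvAlg K A n) {s : ℕ} (ξ ζ : Fin s → A)
    (α β : Fin n → ℕ) (i j : Fin s) : Fin s → A :=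
  if i = j then
    (S.basis.repr ((S.basis ((fun k => max (α k) (β k)) - α) • ξ) i)
        (fun k => max (α k) (β k)))⁻¹ •
      (S.basis ((fun k => max (α k) (β k)) - α) • ξ) -
    (S.basis.repr ((S.basis ((fun k => max (α k) (β k)) - β) • ζ) i)
        (fun k => max (α k) (β k)))⁻¹ •
      (S.basis ((fun k => max (α k) (β k)) - β) • ζ)
  else 0

end SolvAlg

/-- A left monomial ordering on the monomials `{a^α e_i}` of the free module `A^s`:
a total ordering compatible with the (left) multiplication by monomials of `A` and
restricting on each component to the monomial ordering of `A`. -/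
structure ModOrder {K : Type*} [Field K] {A : Type*} [Ring A] [Algebra K A] {n : ℕ}
    (S : SolvAlg K A n) (s : ℕ) where
  lt : ((Fin n → ℕ) × Fin s) → ((Fin n → ℕ) × Fin s) → Prop
  lt_irrefl : ∀ p, ¬ lt p p
  lt_trans : ∀ {p q r}, lt p q → lt q r → lt p r
  lt_total : ∀ p q, lt p q ∨ p = q ∨ lt q p
  compat : ∀ {α β : Fin n → ℕ} {i j : Fin s} (γ δ ε : Fin n → ℕ),
    lt (α, i) (β, j) → SolvAlg.IsLM S (S.basis γ * S.basis α) δ →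
    SolvAlg.IsLM S (S.basis γ * S.basis β) ε → lt (δ, i) (ε, j)
  base : ∀ (α β : Fin n → ℕ) (i : Fin s), S.ord.lt α β → lt (α, i) (β, i)

/-- A monomial ordering on the word basis `𝔹 = FreeMonoid (Fin n)` of the free algebra:
a well-ordering compatible with two-sided multiplication of words such that proper
subwords are smaller. -/
structure WordOrder (n : ℕ) where
  lt : FreeMonoid (Fin n) → FreeMonoid (Fin n) → Prop
  wf : WellFounded lt
  lt_trans : ∀ {U V W}, lt U V → lt V W → lt U W
  lt_total : ∀ U V, lt U V ∨ U = V ∨ lt V U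
  mul_compat : ∀ (W Z U V : FreeMonoid (Fin n)), lt U V → lt (W * U * Z) (W * V * Z)
  subword : ∀ (W Z U V : FreeMonoid (Fin n)), V = W * U * Z → U ≠ V → lt U V

namespace Free9

variable {K : Type*} [Field K] {n : ℕ}

/-- The word basis of the free algebra. -/
noncomputable def wB (K : Type*) [Field K] (n : ℕ) :
    Module.Basis (FreeMonoid (Fin n)) K (FreeAlgebra K (Fin n)) :=
  FreeAlgebra.basisFreeMonoid K (Fin n)

/-- `U` is the leading word of the nonzero element `F` of the free algebra. -/
def IsLMX (O : WordOrder n) (F : FreeAlgebra K (Fin n)) (U : FreeMonoid (Fin n)) : Prop :=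
  U ∈ ((wB K n).repr F).support ∧ ∀ V ∈ ((wB K n).repr F).support, V ≠ U → O.lt V U

/-- A word `U` divides a word `V` if `V = W * U * Z` for some words `W, Z`. -/
def WDvd (U V : FreeMonoid (Fin n)) : Prop := ∃ W Z, V = W * U * Z

/-- `G` is a (two-sided) Gröbner basis of the two-sided ideal specified by `I` (as a set). -/
def IsGBX (O : WordOrder n) (I : Set (FreeAlgebra K (Fin n)))
    (G : Set (FreeAlgebra K (Fin n))) : Prop :=
  G ⊆ I ∧ (0 : FreeAlgebra K (Fin n)) ∉ G ∧
    ∀ F ∈ I, F ≠ 0 → ∃ g ∈ G, ∃ U V, IsLMX O g U ∧ IsLMX O F V ∧ WDvd U V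

/-- Normal words modulo `G`. -/
def NormalWords (O : WordOrder n) (G : Set (FreeAlgebra K (Fin n))) :
    Set (FreeMonoid (Fin n)) :=
  {W | ∀ g ∈ G, ∀ U, IsLMX O g U → ¬ WDvd U W}

/-- A minimal Gröbner basis. -/
def IsMinGBX (O : WordOrder n) (I G : Set (FreeAlgebra K (Fin n))) : Prop :=
  IsGBX O I G ∧ ∀ G' : Set (FreeAlgebra K (Fin n)), G' ⊂ G → ¬ IsGBX O I G'

/-- A reduced Gröbner basis: minimal, monic and with normal tails. -/
def IsRedGBX (O : WordOrder n) (I G : Set (FreeAlgebra K (Fin n))) : Prop :=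
  IsMinGBX O I G ∧
  (∀ g ∈ G, ∀ U, IsLMX O g U → (wB K n).repr g U = 1) ∧
  (∀ g ∈ G, ∀ U, IsLMX O g U →
    g - wB K n U ∈ Submodule.span K ((fun W => wB K n W) '' NormalWords O G))

/-- The ordered word `X_1^{α 1} ⋯ X_n^{α n}`. -/
def ordWord (n : ℕ) (α : Fin n → ℕ) : FreeMonoid (Fin n) :=
  ((List.finRange n).map fun i => (FreeMonoid.of i) ^ (α i)).prod

end Free9

/-!
Order words first by the exponent they reduce to (compared by `≺`) and then lexicographically.
If the products `a_j a_i` (`i < j`) have leading monomial `a_i a_j`, rewriting a descent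
`X_j X_i` of a word by the leading term of `a_j a_i` plus lower terms strictly decreases the
word, so by well-founded induction the image of every word has as leading monomial the ordered
monomial of its exponent. For a solvable algebra this has two consequences: a kernel element
whose leading word were ordered would have a nonzero image, so every leading word in the kernel
contains a descent `X_j X_i`, the leading word of `g_{ji}`; and the tails of the `g_{ji}` are
combinations of ordered words, which are normal. Conversely, the relations
`a_j a_i = λ_{ji} a_i a_j + F̄_{ji}` with `F̄_{ji} ≺ a_i a_j` make the same reduction show that
`a^α a^β` has leading monomial `a^{α+β}`.
-/

namespace List

theorem SortedLE.le_of_perm {α : Type*} [LinearOrder α] :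
    ∀ {l l' : List α}, l.SortedLE → l.Perm l' → l ≤ l'
  | [], _, _, hp => by rw [← hp.nil_eq]
  | _ :: _, [], _, hp => absurd hp.eq_nil (cons_ne_nil _ _)
  | s :: l, u :: l', hs, hp => by
    obtain ⟨hs_le, hl⟩ := pairwise_cons.mp hs.pairwise
    rcases eq_or_ne s u with rfl | hsu
    · exact cons_le_cons s (hl.sortedLE.le_of_perm hp.cons_inv)
    · have hu : u ∈ s :: l := hp.symm.subset mem_cons_self
      have hsu' : s < u := lt_of_le_of_ne
        ((mem_cons.mp hu).elim (fun h => h.ge) (hs_le u)) hsu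
      exact le_of_lt (Lex.rel hsu')

theorem append_lt_append_of_lt_of_length_eq {α : Type*} [LinearOrder α] {l₁ l₂ : List α}
    (w z : List α) (h : l₁ < l₂) (hlen : l₁.length = l₂.length) :
    w ++ l₁ ++ z < w ++ l₂ ++ z := by
  rw [append_assoc, append_assoc]
  refine Lex.append_left _ ?_ w
  induction (h : Lex (· < ·) l₁ l₂) with
  | nil => simp at hlen
  | cons _ ih => exact Lex.cons (ih (by simpa using hlen))
  | rel h => exact Lex.rel h

end List

namespace FreeMonoid

section Exponent

variable {α : Type*} [DecidableEq α]

def exponent (U : FreeMonoid α) (i : α) : ℕ := U.toList.count i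

@[simp]
lemma exponent_mul (U V : FreeMonoid α) : (U * V).exponent = U.exponent + V.exponent := by
  funext i; simp [exponent, toList_mul]

@[simp]
lemma exponent_one : (1 : FreeMonoid α).exponent = 0 := by
  funext i; simp [exponent, toList_one]

@[simp]
lemma exponent_of (i : α) : (of i).exponent = Pi.single i 1 := by
  funext j
  by_cases h : j = i
  · subst h; simp [exponent, toList_of]
  · simp [exponent, toList_of, h, Ne.symm h]

lemma exponent_eq_iff_perm {U V : FreeMonoid α} :
    U.exponent = V.exponent ↔ U.toList.Perm V.toList := by
  simp [exponent, funext_iff, List.perm_iff_count]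

lemma exponent_eq_zero_iff {U : FreeMonoid α} : U.exponent = 0 ↔ U = 1 := by
  rw [← exponent_one, exponent_eq_iff_perm, toList_one, List.perm_nil]
  exact toList.injective.eq_iff' toList_one

lemma finite_setOf_exponent_eq [Finite α] (U₀ : FreeMonoid α) :
    {U : FreeMonoid α | U.exponent = U₀.exponent}.Finite :=
  ((List.finite_length_eq α U₀.toList.length).preimage toList.injective.injOn).subset
    fun _ hU => (exponent_eq_iff_perm.mp hU).length_eq

end Exponent

lemma exists_descent_of_not_sortedLE {α : Type*} [LinearOrder α] {U : FreeMonoid α}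
    (h : ¬ U.toList.SortedLE) :
    ∃ (W Z : FreeMonoid α) (i j : α), i < j ∧ U = W * of j * of i * Z := by
  rw [List.sortedLE_iff_isChain, List.isChain_iff_forall_rel_of_append_cons_cons] at h
  push Not at h
  obtain ⟨j, i, l₁, l₂, hU, hji⟩ := h
  exact ⟨ofList l₁, ofList l₂, i, j, hji,
    toList.injective (by simp [hU, toList_mul, toList_of])⟩

end FreeMonoid

namespace Free9

open FreeMonoid

variable {n : ℕ}

lemma toList_ordWord (m : Fin n → ℕ) :
    (ordWord n m).toList = ((List.finRange n).map fun i => List.replicate (m i) i).flatten := by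
  have toList_pow (i : Fin n) (k : ℕ) : (of i ^ k).toList = List.replicate k i := by
    induction k with
    | zero => rfl
    | succ k ih => rw [pow_succ, toList_mul, ih, toList_of, List.replicate_succ']
  simp [ordWord, toList_prod, Function.comp_def, toList_pow]

@[simp]
lemma exponent_ordWord (m : Fin n → ℕ) : (ordWord n m).exponent = m := by
  funext j
  simp only [exponent, toList_ordWord, List.count_flatten, List.map_map, Function.comp_def,
    List.count_replicate, beq_iff_eq, ← Fin.sum_univ_def]
  simp

lemma sortedLE_ordWord (m : Fin n → ℕ) : (ordWord n m).toList.SortedLE := by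
  rw [List.sortedLE_iff_pairwise, toList_ordWord, List.pairwise_flatten, List.pairwise_map]
  refine ⟨by simp [List.pairwise_replicate], (List.pairwise_lt_finRange n).imp ?_⟩
  intro i j hij x hx y hy
  rw [List.eq_of_mem_replicate hx, List.eq_of_mem_replicate hy]
  exact hij.le

lemma ordWord_exponent {U : FreeMonoid (Fin n)} (hU : U.toList.SortedLE) :
    ordWord n U.exponent = U :=
  toList.injective <| (exponent_eq_iff_perm.mp (exponent_ordWord _)).eq_of_sortedLE
    (sortedLE_ordWord _) hU

lemma mem_range_ordWord_iff {U : FreeMonoid (Fin n)} :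
    U ∈ Set.range (ordWord n) ↔ U.toList.SortedLE :=
  ⟨by rintro ⟨m, rfl⟩; exact sortedLE_ordWord m, fun h => ⟨_, ordWord_exponent h⟩⟩

lemma ordWord_exponent_le (U : FreeMonoid (Fin n)) : (ordWord n U.exponent).toList ≤ U.toList :=
  (sortedLE_ordWord _).le_of_perm (exponent_eq_iff_perm.mp (exponent_ordWord _))

lemma ordWord_single (i : Fin n) : ordWord n (Pi.single i 1) = of i := by
  simpa using ordWord_exponent (U := of i) (by simp [toList_of, List.sortedLE_iff_pairwise])

lemma ordWord_single_add_single {i j : Fin n} (hij : i < j) :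
    ordWord n (Pi.single i 1 + Pi.single j 1) = of i * of j := by
  simpa using ordWord_exponent (U := of i * of j)
    (by simp [toList_mul, toList_of, List.sortedLE_iff_pairwise, hij.le])

lemma lift_ordWord {A : Type*} [Ring A] (a : Fin n → A) (m : Fin n → ℕ) :
    FreeMonoid.lift a (ordWord n m) = SolvMono a m := by
  simp [ordWord, SolvMono, map_list_prod, Function.comp_def]

lemma solvMono_single {A : Type*} [Ring A] (a : Fin n → A) (i : Fin n) :
    SolvMono a (Pi.single i 1) = a i := by
  rw [← lift_ordWord, ordWord_single, lift_eval_of]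

lemma solvMono_single_add_single {A : Type*} [Ring A] (a : Fin n → A) {i j : Fin n}
    (hij : i < j) : SolvMono a (Pi.single i 1 + Pi.single j 1) = a i * a j := by
  rw [← lift_ordWord, ordWord_single_add_single hij, map_mul, lift_eval_of, lift_eval_of]

lemma wB_apply (K : Type*) [Field K] (U : FreeMonoid (Fin n)) :
    wB K n U = FreeMonoid.lift (FreeAlgebra.ι K) U := by
  simp [wB, FreeAlgebra.basisFreeMonoid, FreeAlgebra.equivMonoidAlgebraFreeMonoid]

lemma lift_wB {K : Type*} [Field K] {A : Type*} [Ring A] [Algebra K A] (a : Fin n → A)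
    (U : FreeMonoid (Fin n)) : FreeAlgebra.lift K a (wB K n U) = FreeMonoid.lift a U := by
  simp [wB_apply, FreeMonoid.lift_apply, map_list_prod, Function.comp_def]

lemma ι_mul_ι (K : Type*) [Field K] (i j : Fin n) :
    FreeAlgebra.ι K i * FreeAlgebra.ι K j = wB K n (of i * of j) := by
  simp [wB_apply]

lemma not_wDvd_of_sortedLE {i j : Fin n} (hij : i < j)
    {W : FreeMonoid (Fin n)} (hW : W.toList.SortedLE) : ¬ WDvd (of j * of i) W := by
  rintro ⟨P, Q, rfl⟩
  rw [List.sortedLE_iff_isChain, List.isChain_iff_forall_rel_of_append_cons_cons] at hW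
  exact (hW (l₁ := P.toList) (l₂ := Q.toList) (by simp [toList_mul, toList_of])).not_gt hij

lemma eq_of_wDvd_of_length_eq {U V : FreeMonoid (Fin n)} (h : WDvd U V)
    (hlen : U.length = V.length) : U = V := by
  obtain ⟨P, Q, rfl⟩ := h
  simp only [length_mul] at hlen
  rw [length_eq_zero.mp (by omega : P.length = 0), length_eq_zero.mp (by omega : Q.length = 0),
    one_mul, mul_one]

lemma IsLMX.unique {K : Type*} [Field K] {O : WordOrder n} {F : FreeAlgebra K (Fin n)}
    {U U' : FreeMonoid (Fin n)} (h : IsLMX O F U) (h' : IsLMX O F U') : U = U' := by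
  by_contra hne
  exact O.wf.asymmetric _ _ (h'.2 U h.1 hne) (h.2 U' h'.1 (Ne.symm hne))

lemma exists_isLMX {K : Type*} [Field K] (O : WordOrder n) {F : FreeAlgebra K (Fin n)}
    (hF : F ≠ 0) : ∃ V, IsLMX O F V := by
  have : IsStrictOrder (FreeMonoid (Fin n)) (flip O.lt) :=
    { irrefl := fun U h => O.wf.asymmetric U U h h
      trans := fun _ _ _ h₁ h₂ => O.lt_trans h₂ h₁ }
  obtain ⟨V₀, hV₀⟩ :=
    Finsupp.support_nonempty_iff.mpr ((wB K n).repr.map_ne_zero_iff.mpr hF)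
  obtain ⟨⟨V, hV⟩, -, hmax⟩ := (((wB K n).repr F).support.finite_toSet.wellFoundedOn
    (r := flip O.lt)).has_min Set.univ ⟨⟨V₀, hV₀⟩, trivial⟩
  refine ⟨V, hV, fun U hU hne => ?_⟩
  rcases O.lt_total U V with h | h | h
  · exact h
  · exact absurd h hne
  · exact absurd h (hmax ⟨U, hU⟩ trivial)

end Free9

namespace MonOrder

open FreeMonoid

variable {n : ℕ} (M : MonOrder n)

lemma irrefl (m : Fin n → ℕ) : ¬ M.lt m m := fun h => M.wf.asymmetric m m h h

lemma add_left {m m' : Fin n → ℕ} (γ : Fin n → ℕ) (h : M.lt m m') :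
    M.lt (γ + m) (γ + m') := by
  simpa only [add_comm γ] using M.add_right γ h

def wordLT (U V : FreeMonoid (Fin n)) : Prop :=
  M.lt U.exponent V.exponent ∨ (U.exponent = V.exponent ∧ U.toList < V.toList)

lemma wellFounded_wordLT : WellFounded M.wordLT := by
  have : IsStrictOrder (FreeMonoid (Fin n)) (fun U V => U.toList < V.toList) :=
    { irrefl := fun U => lt_irrefl U.toList, trans := fun _ _ _ => _root_.lt_trans }
  -- each exponent class is finite, so the lexicographic order is well-founded on it
  have hlex : WellFounded fun U V : FreeMonoid (Fin n) =>
      U.exponent = V.exponent ∧ U.toList < V.toList :=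
    ⟨fun V => ((finite_setOf_exponent_eq V).wellFoundedOn
      (r := fun U V : FreeMonoid (Fin n) => U.toList < V.toList)).induction rfl
      fun U hU ih => ⟨U, fun W hW => ih W (hW.1.trans hU) hW.2⟩⟩
  refine Subrelation.wf (fun {U V} h => ?_) (InvImage.wf (fun U => (U.exponent, U))
    (M.wf.prod_lex hlex))
  exact Prod.lex_def.mpr (h.imp id fun h => ⟨h.1, h⟩)

lemma wordLT_trans {U V W : FreeMonoid (Fin n)} (h₁ : M.wordLT U V) (h₂ : M.wordLT V W) :
    M.wordLT U W := by
  rcases h₁ with h₁ | ⟨e₁, l₁⟩ <;> rcases h₂ with h₂ | ⟨e₂, l₂⟩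
  · exact Or.inl (M.lt_trans h₁ h₂)
  · exact Or.inl (e₂ ▸ h₁)
  · exact Or.inl (e₁ ▸ h₂)
  · exact Or.inr ⟨e₁.trans e₂, _root_.lt_trans l₁ l₂⟩

lemma wordLT_total (U V : FreeMonoid (Fin n)) : M.wordLT U V ∨ U = V ∨ M.wordLT V U := by
  rcases M.lt_total U.exponent V.exponent with h | h | h
  · exact Or.inl (Or.inl h)
  · rcases lt_trichotomy U.toList V.toList with hl | hl | hl
    · exact Or.inl (Or.inr ⟨h, hl⟩)
    · exact Or.inr (Or.inl (toList.injective hl))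
    · exact Or.inr (Or.inr (Or.inr ⟨h.symm, hl⟩))
  · exact Or.inr (Or.inr (Or.inl h))

lemma wordLT_mul_mul (W Z : FreeMonoid (Fin n)) {U V : FreeMonoid (Fin n)} (h : M.wordLT U V) :
    M.wordLT (W * U * Z) (W * V * Z) := by
  rcases h with h | ⟨he, hl⟩
  · left
    simpa using M.add_right Z.exponent (M.add_left W.exponent h)
  · right
    refine ⟨by simp [he], ?_⟩
    simpa [toList_mul] using List.append_lt_append_of_lt_of_length_eq W.toList Z.toList hl
      (exponent_eq_iff_perm.mp he).length_eq

lemma wordLT_of_subword (W Z U V : FreeMonoid (Fin n)) (hV : V = W * U * Z) (hne : U ≠ V) :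
    M.wordLT U V := by
  left
  have hWZ : W.exponent + Z.exponent ≠ 0 := by
    intro h
    obtain ⟨hW, hZ⟩ : W.exponent = 0 ∧ Z.exponent = 0 := by
      simpa [funext_iff, forall_and] using h
    simp [exponent_eq_zero_iff.mp hW, exponent_eq_zero_iff.mp hZ] at hV
    exact hne hV.symm
  have := M.add_right U.exponent (M.zero_min _ hWZ)
  rw [zero_add] at this
  convert this using 1
  rw [hV]; simp only [exponent_mul]; abel

def wordOrder : WordOrder n where
  lt := M.wordLT
  wf := M.wellFounded_wordLT
  lt_trans := M.wordLT_trans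
  lt_total := M.wordLT_total
  mul_compat := M.wordLT_mul_mul
  subword := M.wordLT_of_subword

lemma wordLT_of_exponent_lt {U V : FreeMonoid (Fin n)} (h : M.lt U.exponent V.exponent) :
    M.wordLT U V := Or.inl h

lemma wordLT_of_lt {i j : Fin n} (hij : i < j) : M.wordLT (of i * of j) (of j * of i) :=
  Or.inr ⟨by simp [add_comm], by simpa [toList_mul, toList_of] using List.Lex.rel hij⟩

end MonOrder

section LeadingExponent

variable {K : Type*} [Field K] {A : Type*} [AddCommGroup A] [Module K A] {n : ℕ}
  (B : Module.Basis (Fin n → ℕ) K A) (M : MonOrder n)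

def IsLeadExp (x : A) (m : Fin n → ℕ) : Prop :=
  m ∈ (B.repr x).support ∧ ∀ δ ∈ (B.repr x).support, δ ≠ m → M.lt δ m

def lowerSpan (m : Fin n → ℕ) : Submodule K A := Submodule.span K (B '' {δ | M.lt δ m})

variable {B M}

lemma mem_lowerSpan_iff {x : A} {m : Fin n → ℕ} :
    x ∈ lowerSpan B M m ↔ ∀ δ ∈ (B.repr x).support, M.lt δ m :=
  B.mem_span_image

lemma repr_eq_zero_of_mem_lowerSpan {x : A} {m : Fin n → ℕ} (hx : x ∈ lowerSpan B M m) :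
    B.repr x m = 0 :=
  Finsupp.notMem_support_iff.mp fun h => M.irrefl m (mem_lowerSpan_iff.mp hx m h)

lemma isLeadExp_basis (m : Fin n → ℕ) : IsLeadExp B M (B m) m := by
  simp [IsLeadExp, B.repr_self]

lemma IsLeadExp.smul {x : A} {m : Fin n → ℕ} (hx : IsLeadExp B M x m) {c : K} (hc : c ≠ 0) :
    IsLeadExp B M (c • x) m := by
  simpa [IsLeadExp, Finsupp.support_smul_eq hc] using hx

lemma IsLeadExp.add_of_mem_lowerSpan {x y : A} {m : Fin n → ℕ} (hx : IsLeadExp B M x m)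
    (hy : y ∈ lowerSpan B M m) : IsLeadExp B M (x + y) m := by
  refine ⟨?_, fun δ hδ hne => ?_⟩
  · simpa [repr_eq_zero_of_mem_lowerSpan hy] using hx.1
  · rw [map_add] at hδ
    rcases Finset.mem_union.mp (Finsupp.support_add hδ) with h | h
    · exact hx.2 δ h hne
    · exact mem_lowerSpan_iff.mp hy δ h

lemma IsLeadExp.mem_lowerSpan {x : A} {m m' : Fin n → ℕ} (hx : IsLeadExp B M x m)
    (h : M.lt m m') : x ∈ lowerSpan B M m' :=
  mem_lowerSpan_iff.mpr fun δ hδ =>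
    if hδm : δ = m then hδm ▸ h else M.lt_trans (hx.2 δ hδ hδm) h

lemma IsLeadExp.sub_smul_mem_lowerSpan {x : A} {m : Fin n → ℕ} (hx : IsLeadExp B M x m) :
    x - B.repr x m • B m ∈ lowerSpan B M m := by
  refine mem_lowerSpan_iff.mpr fun δ hδ => ?_
  have hδm : δ ≠ m := by rintro rfl; simp at hδ
  refine hx.2 δ ?_ hδm
  simpa [B.repr_self, Finsupp.single_apply, Ne.symm hδm] using hδ

end LeadingExponent

section Rewriting

open FreeMonoid Free9

variable {K : Type*} [Field K] {A : Type*} [Ring A] [Algebra K A] {n : ℕ}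
  {B : Module.Basis (Fin n → ℕ) K A} {M : MonOrder n} {a : Fin n → A}

lemma lift_mul_mul_mem_lowerSpan (hB : ∀ α, B α = SolvMono a α) {W Z : FreeMonoid (Fin n)}
    {e : Fin n → ℕ}
    (ih : ∀ U : FreeMonoid (Fin n), M.lt U.exponent (W.exponent + e + Z.exponent) →
      IsLeadExp B M (FreeMonoid.lift a U) U.exponent)
    {y : A} (hy : y ∈ lowerSpan B M e) :
    FreeMonoid.lift a W * y * FreeMonoid.lift a Z ∈
      lowerSpan B M (W.exponent + e + Z.exponent) := by
  induction hy using Submodule.span_induction with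
  | mem _ hδ =>
    obtain ⟨δ, hδ, rfl⟩ := hδ
    have hlt : M.lt (W * ordWord n δ * Z).exponent (W.exponent + e + Z.exponent) := by
      simpa using M.add_right Z.exponent (M.add_left W.exponent hδ)
    simpa [lift_ordWord, hB] using (ih _ hlt).mem_lowerSpan hlt
  | zero => simp
  | add y z _ _ hy hz => simpa [mul_add, add_mul] using add_mem hy hz
  | smul t y _ hy => simpa using Submodule.smul_mem _ t hy

theorem isLeadExp_lift (hB : ∀ α, B α = SolvMono a α)
    (hrel : ∀ i j, i < j → IsLeadExp B M (a j * a i) (Pi.single i 1 + Pi.single j 1))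
    (U : FreeMonoid (Fin n)) : IsLeadExp B M (FreeMonoid.lift a U) U.exponent := by
  induction U using M.wellFounded_wordLT.induction with
  | _ U ih =>
  by_cases hU : U.toList.SortedLE
  · rw [← ordWord_exponent hU, lift_ordWord, exponent_ordWord, ← hB]
    exact isLeadExp_basis _
  obtain ⟨W, Z, i, j, hij, rfl⟩ := exists_descent_of_not_sortedLE hU
  set e : Fin n → ℕ := Pi.single i 1 + Pi.single j 1
  set c := B.repr (a j * a i) e
  have hexp : (W * of j * of i * Z).exponent = W.exponent + e + Z.exponent := by
    simp only [exponent_mul, exponent_of, e]; abel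
  have hsplit : FreeMonoid.lift a (W * of j * of i * Z) =
      c • FreeMonoid.lift a (W * of i * of j * Z) +
        FreeMonoid.lift a W * (a j * a i - c • B e) * FreeMonoid.lift a Z := by
    rw [hB, solvMono_single_add_single a hij]
    simp only [map_mul, lift_eval_of, mul_sub, sub_mul, mul_smul_comm, smul_mul_assoc]
    noncomm_ring
  have hswap := ih (W * of i * of j * Z)
    (by simpa only [mul_assoc] using M.wordLT_mul_mul W Z (M.wordLT_of_lt hij))
  rw [show (W * of i * of j * Z).exponent = W.exponent + e + Z.exponent by
    simp only [exponent_mul, exponent_of, e]; abel] at hswap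
  rw [hsplit, hexp]
  exact (hswap.smul (Finsupp.mem_support_iff.mp (hrel i j hij).1)).add_of_mem_lowerSpan
    (lift_mul_mul_mem_lowerSpan hB (fun V hV => ih V (M.wordLT_of_exponent_lt (hexp ▸ hV)))
      (hrel i j hij).sub_smul_mem_lowerSpan)

lemma isLeadExp_basis_mul_basis (hB : ∀ α, B α = SolvMono a α)
    (hrel : ∀ i j, i < j → IsLeadExp B M (a j * a i) (Pi.single i 1 + Pi.single j 1))
    (α β : Fin n → ℕ) : IsLeadExp B M (B α * B β) (α + β) := by
  simpa [hB, ← lift_ordWord] using isLeadExp_lift hB hrel (ordWord n α * ordWord n β)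

variable (a B M) in
def SolvAlg.ofIsLeadExp (hB : ∀ α, B α = SolvMono a α)
    (hrel : ∀ i j, i < j → IsLeadExp B M (a j * a i) (Pi.single i 1 + Pi.single j 1)) :
    SolvAlg K A n where
  gen := a
  basis := B
  basis_eq := hB
  ord := M
  s2_lc α β := Finsupp.mem_support_iff.mp (isLeadExp_basis_mul_basis hB hrel α β).1
  s2_lower α β := (isLeadExp_basis_mul_basis hB hrel α β).2

lemma lift_ne_zero_of_isLMX (hB : ∀ α, B α = SolvMono a α)
    (hrel : ∀ i j, i < j → IsLeadExp B M (a j * a i) (Pi.single i 1 + Pi.single j 1))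
    {F : FreeAlgebra K (Fin n)} {V : FreeMonoid (Fin n)} (hV : IsLMX M.wordOrder F V)
    (hVs : V.toList.SortedLE) : FreeAlgebra.lift K a F ≠ 0 := by
  set c := (wB K n).repr F
  have hexpand : FreeAlgebra.lift K a F = ∑ U ∈ c.support, c U • FreeMonoid.lift a U := by
    conv_lhs => rw [← (wB K n).linearCombination_repr F, Finsupp.linearCombination_apply]
    simp [Finsupp.sum, lift_wB, c]
  have hother : ∀ U ∈ c.support, U ≠ V → B.repr (FreeMonoid.lift a U) V.exponent = 0 := by
    intro U hU hUV
    rcases hV.2 U hU hUV with hlt | ⟨he, hlex⟩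
    · exact repr_eq_zero_of_mem_lowerSpan ((isLeadExp_lift hB hrel U).mem_lowerSpan hlt)
    · have := ordWord_exponent_le U
      rw [he, ordWord_exponent hVs] at this
      exact absurd hlex this.not_gt
  have hcoeff : B.repr (FreeAlgebra.lift K a F) V.exponent = c V := by
    rw [hexpand, map_sum, Finsupp.finsetSum_apply, Finset.sum_eq_single_of_mem V hV.1
      fun U hU hUV => by simp [hother U hU hUV]]
    have hVB : FreeMonoid.lift a V = B V.exponent := by
      conv_lhs => rw [← ordWord_exponent hVs]
      rw [lift_ordWord, hB]
    simp [hVB]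
  intro h
  rw [h, map_zero, Finsupp.zero_apply] at hcoeff
  exact Finsupp.mem_support_iff.mp hV.1 hcoeff.symm

lemma isLeadExp_gen_mul_of_lift_eq_zero (hB : ∀ α, B α = SolvMono a α) {i j : Fin n}
    (hij : i < j) {c : K} (hc : c ≠ 0) {F : FreeAlgebra K (Fin n)}
    (hF : FreeAlgebra.lift K a F ∈ lowerSpan B M (Pi.single i 1 + Pi.single j 1))
    (hrel : FreeAlgebra.lift K a
      (FreeAlgebra.ι K j * FreeAlgebra.ι K i - c • (FreeAlgebra.ι K i * FreeAlgebra.ι K j)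
        - F) = 0) :
    IsLeadExp B M (a j * a i) (Pi.single i 1 + Pi.single j 1) := by
  have h : a j * a i = c • B (Pi.single i 1 + Pi.single j 1) + FreeAlgebra.lift K a F := by
    rw [hB, solvMono_single_add_single a hij, ← sub_eq_zero, ← hrel]
    simp only [map_sub, map_mul, map_smul, FreeAlgebra.lift_ι_apply]
    abel
  rw [h]
  exact ((isLeadExp_basis _).smul hc).add_of_mem_lowerSpan hF

end Rewriting

section PBWLift

open Free9

variable (K : Type*) [Field K] (n : ℕ)

def pbwLift : ((Fin n → ℕ) →₀ K) →ₗ[K] FreeAlgebra K (Fin n) :=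
  Finsupp.linearCombination K (wB K n ∘ ordWord n)

variable {K n}

lemma repr_pbwLift (c : (Fin n → ℕ) →₀ K) :
    (wB K n).repr (pbwLift K n c) = c.mapDomain (ordWord n) := by
  rw [pbwLift, Finsupp.linearCombination_comp, LinearMap.comp_apply,
    Module.Basis.repr_linearCombination]
  rfl

lemma lift_pbwLift {A : Type*} [Ring A] [Algebra K A] {a : Fin n → A}
    {B : Module.Basis (Fin n → ℕ) K A} (hB : ∀ α, B α = SolvMono a α)
    (c : (Fin n → ℕ) →₀ K) :
    FreeAlgebra.lift K a (pbwLift K n c) = Finsupp.linearCombination K B c := by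
  simp [pbwLift, Finsupp.linearCombination_apply, Finsupp.sum, lift_wB, lift_ordWord, hB]

lemma pbwLift_mem_span (c : (Fin n → ℕ) →₀ K) :
    pbwLift K n c ∈ Submodule.span K (wB K n '' Set.range (ordWord n)) := by
  rw [← Set.range_comp, ← Finsupp.range_linearCombination]
  exact LinearMap.mem_range_self _ c

lemma mem_range_ordWord_of_mem_support_repr_pbwLift {c : (Fin n → ℕ) →₀ K}
    {W : FreeMonoid (Fin n)} (hW : W ∈ ((wB K n).repr (pbwLift K n c)).support) :
    W ∈ Set.range (ordWord n) := by
  classical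
  rw [repr_pbwLift] at hW
  obtain ⟨δ, -, rfl⟩ := Finset.mem_image.mp (Finsupp.mapDomain_support hW)
  exact ⟨δ, rfl⟩

end PBWLift

namespace SolvAlg

open FreeMonoid Free9

variable {K : Type*} [Field K] {A : Type*} [Ring A] [Algebra K A] {n : ℕ} (S : SolvAlg K A n)

lemma gen_eq_basis (p : Fin n) : S.gen p = S.basis (Pi.single p 1) := by
  rw [S.basis_eq, solvMono_single]

lemma isLeadExp_gen_mul_gen (i j : Fin n) :
    IsLeadExp S.basis S.ord (S.gen j * S.gen i) (Pi.single i 1 + Pi.single j 1) := by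
  rw [gen_eq_basis, gen_eq_basis, add_comm (Pi.single i 1)]
  exact ⟨Finsupp.mem_support_iff.mpr (S.s2_lc _ _), S.s2_lower _ _⟩

/-- The paper's `g_{ji}`: here `λ_{ji} X_i X_j + F_{ji}` is the ordered-word lift of the PBW
expansion of `a_j a_i`. -/
def commRel (j i : Fin n) : FreeAlgebra K (Fin n) :=
  wB K n (of j * of i) - pbwLift K n (S.basis.repr (S.gen j * S.gen i))

def commRels : Set (FreeAlgebra K (Fin n)) := {g | ∃ i j, i < j ∧ g = S.commRel j i}

def commCoeff (j i : Fin n) : K := S.basis.repr (S.gen j * S.gen i) (Pi.single i 1 + Pi.single j 1)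

def commTail (j i : Fin n) : FreeAlgebra K (Fin n) :=
  pbwLift K n ((S.basis.repr (S.gen j * S.gen i)).erase (Pi.single i 1 + Pi.single j 1))

lemma commCoeff_ne_zero (i j : Fin n) : S.commCoeff j i ≠ 0 :=
  Finsupp.mem_support_iff.mp (S.isLeadExp_gen_mul_gen i j).1

lemma commRel_eq {i j : Fin n} (hij : i < j) :
    FreeAlgebra.ι K j * FreeAlgebra.ι K i
      - S.commCoeff j i • (FreeAlgebra.ι K i * FreeAlgebra.ι K j) - S.commTail j i =
      S.commRel j i := by
  set e : Fin n → ℕ := Pi.single i 1 + Pi.single j 1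
  set c := S.basis.repr (S.gen j * S.gen i)
  have hsplit : pbwLift K n c = c e • (FreeAlgebra.ι K i * FreeAlgebra.ι K j) +
      pbwLift K n (c.erase e) := by
    conv_lhs => rw [← Finsupp.single_add_erase e c]
    rw [map_add, pbwLift, Finsupp.linearCombination_single, Function.comp_apply,
      ordWord_single_add_single hij, ι_mul_ι]
  rw [commRel, commTail, commCoeff, hsplit, ι_mul_ι]
  abel

lemma setOf_eq_commRels :
    {g | ∃ i j : Fin n, i < j ∧ g = FreeAlgebra.ι K j * FreeAlgebra.ι K i
      - S.commCoeff j i • (FreeAlgebra.ι K i * FreeAlgebra.ι K j) - S.commTail j i} =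
      S.commRels := by
  ext g
  exact exists₂_congr fun i j => and_congr_right fun hij => by rw [S.commRel_eq hij]

lemma lift_commRel (j i : Fin n) : FreeAlgebra.lift K S.gen (S.commRel j i) = 0 := by
  simp [commRel, lift_wB, lift_pbwLift S.basis_eq]

lemma repr_commRel (j i : Fin n) : (wB K n).repr (S.commRel j i) =
    Finsupp.single (of j * of i) 1 - (S.basis.repr (S.gen j * S.gen i)).mapDomain (ordWord n) := by
  simp [commRel, repr_pbwLift]

lemma repr_commRel_self {i j : Fin n} (hij : i < j) :
    (wB K n).repr (S.commRel j i) (of j * of i) = 1 := by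
  rw [repr_commRel, Finsupp.sub_apply, Finsupp.single_eq_same,
    Finsupp.mapDomain_of_notMem_range _ _ ?_, sub_zero]
  rw [mem_range_ordWord_iff]
  exact fun h => not_wDvd_of_sortedLE hij h ⟨1, 1, by simp⟩

lemma commRel_ne_zero {i j : Fin n} (hij : i < j) : S.commRel j i ≠ 0 := fun h => by
  simpa [h] using S.repr_commRel_self hij

lemma isLMX_commRel {i j : Fin n} (hij : i < j) :
    IsLMX S.ord.wordOrder (S.commRel j i) (of j * of i) := by
  classical
  refine ⟨by simp [S.repr_commRel_self hij], fun V hV hne => ?_⟩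
  have hV' : V ∈ ((S.basis.repr (S.gen j * S.gen i)).mapDomain (ordWord n)).support := by
    simpa [repr_commRel, Finsupp.single_apply, Ne.symm hne] using hV
  obtain ⟨δ, hδ, rfl⟩ := Finset.mem_image.mp (Finsupp.mapDomain_support hV')
  rcases eq_or_ne δ (Pi.single i 1 + Pi.single j 1) with rfl | hδe
  · rw [ordWord_single_add_single hij]
    exact S.ord.wordLT_of_lt hij
  · refine S.ord.wordLT_of_exponent_lt ?_
    simpa [add_comm] using (S.isLeadExp_gen_mul_gen i j).2 δ hδ hδe

lemma isGBX_commRels :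
    IsGBX S.ord.wordOrder {x | FreeAlgebra.lift K S.gen x = 0} S.commRels := by
  refine ⟨?_, ?_, fun F hF hF0 => ?_⟩
  · rintro _ ⟨i, j, -, rfl⟩
    exact S.lift_commRel j i
  · rintro ⟨i, j, hij, h⟩
    exact S.commRel_ne_zero hij h.symm
  · obtain ⟨V, hV⟩ := exists_isLMX S.ord.wordOrder hF0
    have hVs : ¬ V.toList.SortedLE := fun hVs =>
      lift_ne_zero_of_isLMX S.basis_eq (fun i j _ => S.isLeadExp_gen_mul_gen i j) hV hVs hF
    obtain ⟨W, Z, i, j, hij, rfl⟩ := exists_descent_of_not_sortedLE hVs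
    exact ⟨S.commRel j i, ⟨i, j, hij, rfl⟩, _, _, S.isLMX_commRel hij, hV, W, Z, by
      simp only [mul_assoc]⟩

lemma isMinGBX_commRels :
    IsMinGBX S.ord.wordOrder {x | FreeAlgebra.lift K S.gen x = 0} S.commRels := by
  refine ⟨S.isGBX_commRels, fun G hG hGB => ?_⟩
  obtain ⟨_, ⟨i, j, hij, rfl⟩, hnot⟩ := Set.exists_of_ssubset hG
  obtain ⟨_, hg, U, V, hU, hV, hUV⟩ := hGB.2.2 _ (S.lift_commRel j i) (S.commRel_ne_zero hij)
  obtain ⟨i', j', hij', rfl⟩ := hG.subset hg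
  rw [hU.unique (S.isLMX_commRel hij'), hV.unique (S.isLMX_commRel hij)] at hUV
  have h := congrArg toList (eq_of_wDvd_of_length_eq hUV rfl)
  simp only [toList_mul, toList_of, List.cons_append, List.nil_append, List.cons.injEq,
    and_true] at h
  obtain ⟨rfl, rfl⟩ := h
  exact hnot hg

lemma mem_normalWords_of_sortedLE {W : FreeMonoid (Fin n)} (hW : W.toList.SortedLE) :
    W ∈ NormalWords S.ord.wordOrder S.commRels := by
  rintro _ ⟨i, j, hij, rfl⟩ U hU
  rw [hU.unique (S.isLMX_commRel hij)]
  exact not_wDvd_of_sortedLE hij hW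

lemma isRedGBX_commRels :
    IsRedGBX S.ord.wordOrder {x | FreeAlgebra.lift K S.gen x = 0} S.commRels := by
  refine ⟨S.isMinGBX_commRels, ?_, ?_⟩
  · rintro _ ⟨i, j, hij, rfl⟩ U hU
    rw [hU.unique (S.isLMX_commRel hij), S.repr_commRel_self hij]
  · rintro _ ⟨i, j, hij, rfl⟩ U hU
    rw [hU.unique (S.isLMX_commRel hij), commRel, sub_sub_cancel_left]
    refine Submodule.neg_mem _ (Submodule.span_mono (Set.image_mono ?_) (pbwLift_mem_span _))
    rintro _ ⟨δ, rfl⟩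
    exact S.mem_normalWords_of_sortedLE (sortedLE_ordWord δ)

lemma finite_commRels : S.commRels.Finite :=
  (Set.finite_range fun p : Fin n × Fin n => S.commRel p.1 p.2).subset
    fun _ ⟨i, j, _, hg⟩ => ⟨(j, i), hg.symm⟩

lemma lift_commTail_mem_lowerSpan (i j : Fin n) :
    FreeAlgebra.lift K S.gen (S.commTail j i) ∈
      lowerSpan S.basis S.ord (Pi.single i 1 + Pi.single j 1) := by
  classical
  rw [mem_lowerSpan_iff, commTail, lift_pbwLift S.basis_eq, Module.Basis.repr_linearCombination,
    Finsupp.support_erase]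
  intro δ hδ
  exact (S.isLeadExp_gen_mul_gen i j).2 δ (Finset.mem_of_mem_erase hδ)
    (Finset.ne_of_mem_erase hδ)

end SolvAlg

theorem solvAlg_characterization_general {K : Type*} [Field K] {A : Type*} [Ring A] [Algebra K A]
    {n : ℕ} (a : Fin n → A) :
    (∃ S : SolvAlg K A n, S.gen = a) ↔
    ∃ (O : WordOrder n) (lam : Fin n → Fin n → K)
      (Fm : Fin n → Fin n → FreeAlgebra K (Fin n)),
      (∃ G₀ : Set (FreeAlgebra K (Fin n)), G₀.Finite ∧
        Free9.IsGBX O {x | FreeAlgebra.lift K a x = 0} G₀) ∧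
      (∀ i j : Fin n, i < j → lam j i ≠ 0) ∧
      Free9.IsRedGBX O {x | FreeAlgebra.lift K a x = 0}
        {g | ∃ i j : Fin n, i < j ∧
          g = FreeAlgebra.ι K j * FreeAlgebra.ι K i
              - lam j i • (FreeAlgebra.ι K i * FreeAlgebra.ι K j) - Fm j i} ∧
      (∀ i j : Fin n, i < j →
        Free9.IsLMX O (FreeAlgebra.ι K j * FreeAlgebra.ι K i
            - lam j i • (FreeAlgebra.ι K i * FreeAlgebra.ι K j) - Fm j i)
          (FreeMonoid.of j * FreeMonoid.of i)) ∧
      (∀ i j : Fin n, i < j → ∀ W ∈ ((Free9.wB K n).repr (Fm j i)).support,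
        W ∈ Set.range (Free9.ordWord n)) ∧
      ∃ B : Module.Basis (Fin n → ℕ) K A, (∀ α, B α = SolvMono a α) ∧
        ∃ Ord : MonOrder n, ∀ i j : Fin n, i < j →
          ∀ δ ∈ (B.repr (FreeAlgebra.lift K a (Fm j i))).support,
            Ord.lt δ (Pi.single i 1 + Pi.single j 1) := by
  constructor
  · rintro ⟨S, rfl⟩
    refine ⟨S.ord.wordOrder, S.commCoeff, S.commTail,
      ⟨S.commRels, S.finite_commRels, S.isGBX_commRels⟩, fun i j _ => S.commCoeff_ne_zero i j,
      S.setOf_eq_commRels ▸ S.isRedGBX_commRels, fun i j hij => S.commRel_eq hij ▸ S.isLMX_commRel hij,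
      fun i j _ _ => mem_range_ordWord_of_mem_support_repr_pbwLift, S.basis, S.basis_eq, S.ord,
      fun i j _ => mem_lowerSpan_iff.mp (S.lift_commTail_mem_lowerSpan i j)⟩
  · rintro ⟨O, lam, Fm, -, hlam, hred, -, -, B, hB, M, hM⟩
    exact ⟨.ofIsLeadExp B M a hB fun i j hij => isLeadExp_gen_mul_of_lift_eq_zero hB hij
      (hlam i j hij) (mem_lowerSpan_iff.mpr (hM i j hij)) (hred.1.1.1 ⟨i, j, hij, rfl⟩), rfl⟩

/-- Theorem 1.4.16: a finitely generated `K`-algebra `A = K[a_1,…,a_n]` (with `{a_i}` a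
minimal generating set, `π : K⟨X⟩ → A` the canonical epimorphism and `I = Ker π`) is a
solvable polynomial algebra iff (a) for some monomial ordering on words, `I` has a finite
Gröbner basis whose reduced Gröbner basis consists of elements
`g_{ji} = X_jX_i − λ_{ji}X_iX_j − F_{ji}` (`i < j`) with `LM(g_{ji}) = X_jX_i`, `λ_{ji} ≠ 0`
and `F_{ji}` a combination of ordered words — so that the ordered monomials in the `a_i`
form a PBW `K`-basis of `A` — and (b) there is a monomial ordering `≺` on this PBW basis
such that `LM(F̄_{ji}) ≺ a_i a_j` whenever `F̄_{ji} ≠ 0`. -/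
theorem solvAlg_characterization {K : Type*} [Field K] {A : Type*} [Ring A] [Algebra K A]
    {n : ℕ} (a : Fin n → A)
    (hgen : Algebra.adjoin K (Set.range a) = ⊤)
    (hmin : ∀ i : Fin n, Algebra.adjoin K (a '' {j | j ≠ i}) ≠ ⊤) :
    (∃ S : SolvAlg K A n, S.gen = a) ↔
    ∃ (O : WordOrder n) (lam : Fin n → Fin n → K)
      (Fm : Fin n → Fin n → FreeAlgebra K (Fin n)),
      (∃ G₀ : Set (FreeAlgebra K (Fin n)), G₀.Finite ∧
        Free9.IsGBX O {x | FreeAlgebra.lift K a x = 0} G₀) ∧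
      (∀ i j : Fin n, i < j → lam j i ≠ 0) ∧
      Free9.IsRedGBX O {x | FreeAlgebra.lift K a x = 0}
        {g | ∃ i j : Fin n, i < j ∧
          g = FreeAlgebra.ι K j * FreeAlgebra.ι K i
              - lam j i • (FreeAlgebra.ι K i * FreeAlgebra.ι K j) - Fm j i} ∧
      (∀ i j : Fin n, i < j →
        Free9.IsLMX O (FreeAlgebra.ι K j * FreeAlgebra.ι K i
            - lam j i • (FreeAlgebra.ι K i * FreeAlgebra.ι K j) - Fm j i)
          (FreeMonoid.of j * FreeMonoid.of i)) ∧
      (∀ i j : Fin n, i < j → ∀ W ∈ ((Free9.wB K n).repr (Fm j i)).support,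
        W ∈ Set.range (Free9.ordWord n)) ∧
      ∃ B : Module.Basis (Fin n → ℕ) K A, (∀ α, B α = SolvMono a α) ∧
        ∃ Ord : MonOrder n, ∀ i j : Fin n, i < j →
          ∀ δ ∈ (B.repr (FreeAlgebra.lift K a (Fm j i))).support,
            Ord.lt δ (Pi.single i 1 + Pi.single j 1) :=
  solvAlg_characterization_general a
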